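/- arXiv:2303.10737 — 4 statements merged into one kernel-verified Lean document; each statement's English description precedes it below -/
import Mathlib

section
/- For every n ≥ 1, the map M_n(S^1) → Circle × Q_n sending (z_1,…,z_n) to (z_n, (z_1·z_n⁻¹, …, z_{n−1}·z_n⁻¹, 1)) is a homeomorphism; in particular the configuration space M_n(S^1) splits as a Cartesian product S^1 × Q_n. -/
open scoped Real

noncomputable section

/-- The configuration space `Q_{n+1}` of `n+1` ordered points on the circle,
no three of which coincide, with the last point fixed at `1`. -/
def QSet (n : ℕ) : Set (Fin (n + 1) → Circle) :=
  {z | z (Fin.last n) = 1 ∧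
    ∀ i j k : Fin (n + 1), i ≠ j → i ≠ k → j ≠ k → ¬(z i = z j ∧ z i = z k)}

/-- The basepoint of `Q_{n+1}`: the `j`-th coordinate is `exp (2 π i j / (n+1))` (`1`-based). -/
def q0 (n : ℕ) : Fin (n + 1) → Circle :=
  fun j => Circle.exp (2 * π * (j.val + 1) / (n + 1))

theorem q0_injective (n : ℕ) : Function.Injective (q0 n) := by
  intro i j h
  simp only [q0] at h; rw [Circle.exp_eq_exp] at h
  obtain ⟨m, hm⟩ := h
  have hn : (0:ℝ) < (n:ℝ) + 1 := by positivity
  have hpi : (0:ℝ) < π := Real.pi_pos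
  have h2 : ((i.val : ℝ) + 1) = ((j.val : ℝ) + 1) + m * ((n:ℝ) + 1) := by
    field_simp at hm
    nlinarith [hm]
  have h3 : ((i.val : ℤ) + 1) = ((j.val : ℤ) + 1) + m * ((n:ℤ) + 1) := by
    exact_mod_cast h2
  have hi := i.isLt
  have hj := j.isLt
  have hb : m * ((n:ℤ) + 1) = (i.val : ℤ) - (j.val : ℤ) := by linarith [h3]
  have hi' : (i.val : ℤ) ≤ n := by exact_mod_cast Nat.lt_succ_iff.mp hi
  have hj' : (j.val : ℤ) ≤ n := by exact_mod_cast Nat.lt_succ_iff.mp hj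
  have hi0 : (0:ℤ) ≤ i.val := Int.natCast_nonneg _
  have hj0 : (0:ℤ) ≤ j.val := Int.natCast_nonneg _
  have hm0 : m = 0 := by
    rcases lt_trichotomy m 0 with hm' | hm' | hm'
    · have h1 : m ≤ -1 := by omega
      nlinarith
    · exact hm'
    · have h1 : 1 ≤ m := hm'
      nlinarith
  subst hm0
  simp only [zero_mul] at hb
  have : (i.val : ℤ) = j.val := by omega
  exact Fin.ext (by exact_mod_cast this)

theorem q0_mem (n : ℕ) : q0 n ∈ QSet n := by
  constructor
  · show Circle.exp _ = 1
    have : 2 * π * ((Fin.last n).val + 1) / (n + 1) = 2 * π := by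
      simp [Fin.last]
      field_simp
    rw [this, Circle.exp_two_pi]
  · intro i j k hij _ _ h
    exact hij (q0_injective n h.1)

/-- The basepoint as an element of `Q_{n+1}`. -/
def Qbase (n : ℕ) : QSet n := ⟨q0 n, q0_mem n⟩

/-- The annular configuration space `M_{n+1}(S¹)` of `n+1` ordered points on the circle,
no three of which coincide. -/
def MSet (n : ℕ) : Set (Fin (n + 1) → Circle) :=
  {z | ∀ i j k : Fin (n + 1), i ≠ j → i ≠ k → j ≠ k → ¬(z i = z j ∧ z i = z k)}

theorem QSet_subset_MSet (n : ℕ) : QSet n ⊆ MSet n := fun _ hz => hz.2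

/-- The map `M_{n+1}(S¹) → S¹ × Q_{n+1}` sending `(z₁, …, z_{n+1})` to
`(z_{n+1}, (z₁ · z_{n+1}⁻¹, …, zₙ · z_{n+1}⁻¹, 1))`. -/
def splitMap (n : ℕ) : ↥(MSet n) → Circle × ↥(QSet n) :=
  fun z =>
    (z.1 (Fin.last n),
      ⟨fun j => z.1 j * (z.1 (Fin.last n))⁻¹,
        ⟨mul_inv_cancel _,
          fun i j k hij hik hjk h =>
            z.2 i j k hij hik hjk ⟨mul_right_cancel h.1, mul_right_cancel h.2⟩⟩⟩)

theorem comp_mem_MSet {n : ℕ} {f : Circle → Circle} (hf : Function.Injective f)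
    {z : Fin (n + 1) → Circle} (hz : z ∈ MSet n) : f ∘ z ∈ MSet n :=
  fun i j k hij hik hjk h => hz i j k hij hik hjk ⟨hf h.1, hf h.2⟩

section SplitAt

variable {G ι : Type*} [TopologicalSpace G] [Group G] [IsTopologicalGroup G]

def Homeomorph.splitAt (i₀ : ι) (S : Set (ι → G)) (hS : ∀ z ∈ S, ∀ g : G, (· * g) ∘ z ∈ S) :
    S ≃ₜ G × ↥({z | z i₀ = 1} ∩ S) where
  toFun z := (z.1 i₀, ⟨(· * (z.1 i₀)⁻¹) ∘ z.1, mul_inv_cancel _, hS _ z.2 _⟩)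
  invFun p := ⟨(· * p.1) ∘ p.2.1, hS _ p.2.2.2 _⟩
  left_inv z := by ext; simp
  right_inv p := by
    have h : p.2.1 i₀ = 1 := p.2.2.1
    ext <;> simp [h]
  continuous_toFun := by
    have h_eval : Continuous fun z : ι → G => z i₀ := by fun_prop
    have h_normalize : Continuous fun z : ι → G => fun j => z j * (z i₀)⁻¹ := by fun_prop
    exact (h_eval.comp continuous_subtype_val).prodMk
      ((h_normalize.comp continuous_subtype_val).subtype_mk _)
  continuous_invFun := by
    have h_translate : Continuous fun q : G × (ι → G) => fun j => q.2 j * q.1 := by fun_prop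
    exact (h_translate.comp (continuous_fst.prodMk
      (continuous_subtype_val.comp continuous_snd))).subtype_mk _

end SplitAt

/-- For every `n ≥ 1` (here `Mₙ(S¹) = MSet (n-1)` and `Qₙ = QSet (n-1)`),
the map `Mₙ(S¹) → S¹ × Qₙ`, `(z₁,…,zₙ) ↦ (zₙ, (z₁·zₙ⁻¹, …, z_{n-1}·zₙ⁻¹, 1))`, is a
homeomorphism; in particular `Mₙ(S¹)` splits as a Cartesian product `S¹ × Qₙ`. -/
theorem isHomeomorph_splitMap (n : ℕ) : IsHomeomorph (splitMap n) :=
  -- `QSet n` unfolds to `{z | z (Fin.last n) = 1} ∩ MSet n`, so this homeomorphism is `splitMap n`.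
  (Homeomorph.splitAt (Fin.last n) (MSet n)
    fun _ hz g => comp_mem_MSet (mul_left_injective g) hz).isHomeomorph
end
end

section
/- For every n ≥ 3, the assignments σ_i ↦ s_{i,i+1} for 1 ≤ i ≤ n−1 and ζ ↦ s_{1,n}·s_{2,n} respect the defining relations of Υ_n and hence extend to a group homomorphism κ: Υ_n → J_n. -/
/-!
By von Dyck's theorem it suffices to check the relations of `Υₙ` on the proposed images; those
among the `σᵢ` are instances of the relations of `Jₙ`. For `σᵢζ = ζσᵢ₊₁`: conjugation by
`s_{p,q}` flips the generators inside `[p, q]`, so `ζ = s_{1,n} s_{2,n}` is a composite of two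
flips. The flip of `[2, n]` sends `s_{i+1,i+2}` to `s_{n-i,n-i+1}`, and the flip of `[1, n]`
sends that to `s_{i,i+1}`.
-/

/-- Generators of the cactus group `Jₙ`: pairs `(p, q)` of `0`-based indices with `p < q`;
the pair `(p, q)` represents the generator `s_{p+1, q+1}` in `1`-based notation. -/
def CactusGen (n : ℕ) : Type := {pq : Fin n × Fin n // pq.1 < pq.2}

/-- The defining relators of the cactus group `Jₙ` (in `0`-based notation):
`s_{p,q}² = 1`; `s_{p,q}s_{m,r} = s_{m,r}s_{p,q}` whenever the intervals `[p,q]` and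
`[m,r]` are disjoint; and `s_{p,q}s_{m,r} = s_{p+q-r,p+q-m}s_{p,q}` whenever
`p ≤ m < r ≤ q`. -/
def cactusRels (n : ℕ) : Set (FreeGroup (CactusGen n)) :=
  {w | (∃ a : CactusGen n, w = FreeGroup.of a * FreeGroup.of a) ∨
       (∃ a b : CactusGen n, (a.1.2 < b.1.1 ∨ b.1.2 < a.1.1) ∧
          w = FreeGroup.of a * FreeGroup.of b * (FreeGroup.of a)⁻¹ * (FreeGroup.of b)⁻¹) ∨
       (∃ a b c : CactusGen n, a.1.1 ≤ b.1.1 ∧ b.1.2 ≤ a.1.2 ∧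
          (c.1.1 : ℕ) = (a.1.1 : ℕ) + (a.1.2 : ℕ) - (b.1.2 : ℕ) ∧
          (c.1.2 : ℕ) = (a.1.1 : ℕ) + (a.1.2 : ℕ) - (b.1.1 : ℕ) ∧
          w = FreeGroup.of a * FreeGroup.of b * (FreeGroup.of a)⁻¹ * (FreeGroup.of c)⁻¹)}

/-- The cactus group `Jₙ`, presented with generators `s_{p,q}`, `1 ≤ p < q ≤ n`, and
relations `s_{p,q}² = 1`, `s_{p,q}s_{m,r} = s_{m,r}s_{p,q}` for `[p,q] ∩ [m,r] = ∅`, and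
`s_{p,q}s_{m,r} = s_{p+q-r,p+q-m}s_{p,q}` for `p ≤ m < r ≤ q`. -/
def CactusGroup (n : ℕ) : Type := PresentedGroup (cactusRels n)

instance (n : ℕ) : Group (CactusGroup n) := inferInstanceAs (Group (PresentedGroup _))

/-- The generator `s_{p+1,q+1}` of the cactus group `Jₙ`. -/
def cactusGen {n : ℕ} (a : CactusGen n) : CactusGroup n := PresentedGroup.of a

/-- The defining relators of the round twin group `Υₙ`, with generators
`Sum.inl i = σ_{i+1}` (for `i : Fin (n-1)`, `0`-based) and `Sum.inr () = ζ`: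
`σᵢ² = 1`; `σᵢσⱼ = σⱼσᵢ` whenever `|i - j| > 1`; and `σᵢζ = ζσ_{i+1}` for
`1 ≤ i ≤ n - 2`. -/
def twinRels (n : ℕ) : Set (FreeGroup (Fin (n - 1) ⊕ Unit)) :=
  {w | (∃ i : Fin (n - 1), w = FreeGroup.of (.inl i) * FreeGroup.of (.inl i)) ∨
       (∃ i j : Fin (n - 1), ((i : ℕ) + 1 < (j : ℕ) ∨ (j : ℕ) + 1 < (i : ℕ)) ∧
          w = FreeGroup.of (.inl i) * FreeGroup.of (.inl j) *
            (FreeGroup.of (.inl i))⁻¹ * (FreeGroup.of (.inl j))⁻¹) ∨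
       (∃ i j : Fin (n - 1), (j : ℕ) = (i : ℕ) + 1 ∧
          w = FreeGroup.of (.inl i) * FreeGroup.of (.inr ()) *
            (FreeGroup.of (.inl j))⁻¹ * (FreeGroup.of (.inr ()))⁻¹)}

/-- The round twin group `Υₙ`, presented with generators `σ₁, …, σ_{n-1}, ζ` and relations
`σᵢ² = 1`, `σᵢσⱼ = σⱼσᵢ` for `|i - j| > 1`, and `σᵢζ = ζσ_{i+1}` for `1 ≤ i ≤ n - 2`. -/
def RoundTwinGroup (n : ℕ) : Type := PresentedGroup (twinRels n)

instance (n : ℕ) : Group (RoundTwinGroup n) := inferInstanceAs (Group (PresentedGroup _))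

/-- The generator `σ_{i+1}` of the round twin group `Υₙ`. -/
def twinSigma {n : ℕ} (i : Fin (n - 1)) : RoundTwinGroup n := PresentedGroup.of (.inl i)

/-- The generator `ζ` of the round twin group `Υₙ`. -/
def twinZeta {n : ℕ} : RoundTwinGroup n := PresentedGroup.of (.inr ())

namespace CactusGen

/-- The generator `s_{p+1,q+1}` (endpoints are `0`-based). -/
def interval {n : ℕ} (p q : ℕ) (hpq : p < q) (hq : q < n) : CactusGen n :=
  ⟨(⟨p, hpq.trans hq⟩, ⟨q, hq⟩), Fin.mk_lt_mk.mpr hpq⟩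

end CactusGen

namespace CactusGroup

open CactusGen

variable {n : ℕ}

theorem gen_mul_self (a : CactusGen n) : cactusGen a * cactusGen a = 1 :=
  PresentedGroup.one_of_mem (Or.inl ⟨a, rfl⟩)

theorem commute_gen (a b : CactusGen n) (h : a.1.2 < b.1.1 ∨ b.1.2 < a.1.1) :
    Commute (cactusGen a) (cactusGen b) :=
  commutatorElement_eq_one_iff_commute.mp
    (PresentedGroup.one_of_mem (Or.inr (Or.inl ⟨a, b, h, rfl⟩)))

theorem interval_conj_interval {p q m r m' r' : ℕ} (hpm : p ≤ m) (hmr : m < r) (hrq : r ≤ q)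
    (hq : q < n) (hm' : m' + r = p + q) (hr' : r' + m = p + q) :
    cactusGen (interval p q (by omega) hq) * cactusGen (interval m r hmr (by omega)) *
        (cactusGen (interval p q (by omega) hq))⁻¹ =
      cactusGen (interval m' r' (by omega) (by omega)) :=
  mul_inv_eq_one.mp <| PresentedGroup.one_of_mem <| Or.inr <| Or.inr
    ⟨_, _, _, Fin.mk_le_mk.mpr hpm, Fin.mk_le_mk.mpr hrq, by simp [interval]; omega,
      by simp [interval]; omega, rfl⟩

/-- The adjacent transposition `s_{j+1,j+2}`. -/
def adjacent (j : ℕ) (hj : j + 1 < n) : CactusGroup n :=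
  cactusGen (interval j (j + 1) (Nat.lt_add_one j) hj)

/-- The element `s_{1,n} s_{2,n}`, the image of `ζ`. -/
def zeta (hn : 3 ≤ n) : CactusGroup n :=
  have hq : n - 1 < n := Nat.sub_one_lt_of_lt hn
  have hp : 1 < n - 1 := Nat.lt_sub_of_add_lt hn
  cactusGen (interval 0 (n - 1) (Nat.zero_lt_one.trans hp) hq) *
    cactusGen (interval 1 (n - 1) hp hq)

theorem zeta_conj_adjacent (hn : 3 ≤ n) {j : ℕ} (hj : j + 2 < n) :
    zeta hn * adjacent (j + 1) hj * (zeta hn)⁻¹ = adjacent j (by omega) := by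
  have inner := interval_conj_interval (n := n) (p := 1) (q := n - 1) (m := j + 1) (r := j + 2)
    (m' := n - j - 2) (r' := n - j - 1) (by omega) (by omega) (by omega) (by omega) (by omega)
    (by omega)
  have outer := interval_conj_interval (n := n) (p := 0) (q := n - 1) (m := n - j - 2)
    (r := n - j - 1) (m' := j) (r' := j + 1) (by omega) (by omega) (by omega) (by omega)
    (by omega) (by omega)
  rw [adjacent, adjacent, ← outer, ← inner, zeta]
  group

end CactusGroup

namespace RoundTwinGroup

open CactusGroup

variable {n : ℕ}

def kappaGen (hn : 3 ≤ n) : Fin (n - 1) ⊕ Unit → CactusGroup n :=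
  Sum.elim (fun i => adjacent i (by omega)) fun _ => zeta hn

theorem lift_kappaGen_eq_one (hn : 3 ≤ n) :
    ∀ w ∈ twinRels n, FreeGroup.lift (kappaGen hn) w = 1 := by
  rintro w (⟨i, rfl⟩ | ⟨i, j, hij, rfl⟩ | ⟨i, ⟨j, hj⟩, hij, rfl⟩)
  · exact gen_mul_self _
  · simp only [map_mul, map_inv, FreeGroup.lift_apply_of]
    exact commutatorElement_eq_one_iff_commute.mpr <| commute_gen _ _ <|
      hij.imp Fin.mk_lt_mk.mpr Fin.mk_lt_mk.mpr
  · obtain rfl : j = i + 1 := hij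
    simp only [map_mul, map_inv, FreeGroup.lift_apply_of, kappaGen, Sum.elim_inl, Sum.elim_inr]
    rw [← zeta_conj_adjacent hn (j := i) (by omega)]
    group

end RoundTwinGroup

/-- For every `n ≥ 3`, the assignments `σᵢ ↦ s_{i,i+1}` for `1 ≤ i ≤ n-1` and
`ζ ↦ s_{1,n} · s_{2,n}` respect the defining relations of `Υₙ`, and hence extend to a group
homomorphism `κ : Υₙ → Jₙ`. -/
theorem exists_kappa (n : ℕ) (hn : 3 ≤ n) :
    ∃ κ : RoundTwinGroup n →* CactusGroup n,
      (∀ i : Fin (n - 1),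
        κ (twinSigma i) = cactusGen ⟨(⟨(i : ℕ), by have := i.isLt; omega⟩,
          ⟨(i : ℕ) + 1, by have := i.isLt; omega⟩), Fin.mk_lt_mk.mpr (Nat.lt_succ_self _)⟩) ∧
      κ twinZeta =
        cactusGen ⟨(⟨0, by omega⟩, ⟨n - 1, by omega⟩), Fin.mk_lt_mk.mpr (by omega)⟩ *
        cactusGen ⟨(⟨1, by omega⟩, ⟨n - 1, by omega⟩), Fin.mk_lt_mk.mpr (by omega)⟩ := by
  have hrels := RoundTwinGroup.lift_kappaGen_eq_one hn
  exact ⟨PresentedGroup.toGroup hrels, fun _ => PresentedGroup.toGroup.of hrels,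
    PresentedGroup.toGroup.of hrels⟩
end

section
/- The group homomorphism κ: Υ_3 → J_3 determined by κ(σ_1) = s_{1,2}, κ(σ_2) = s_{2,3} and κ(ζ) = s_{1,3}·s_{2,3} is not injective. -/
/-! The image `κ(ζσ₁) = s₁₃s₂₃s₁₂ = s₁₂s₁₃s₁₂` is a conjugate of `s₁₃`, hence an involution, so
`κ((ζσ₁)²) = 1`. But `(ζσ₁)² ≠ 1` in `Υ₃`: the homomorphism `Υₙ → ℤ` counting the exponent of `ζ`
sends it to `2`. -/

section

variable {n : ℕ}

theorem cactusGen_mul_self (a : CactusGen n) : cactusGen a * cactusGen a = 1 :=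
  PresentedGroup.one_of_mem (Or.inl ⟨a, rfl⟩)

theorem cactusGen_inv (a : CactusGen n) : (cactusGen a)⁻¹ = cactusGen a :=
  inv_eq_of_mul_eq_one_right (cactusGen_mul_self a)

theorem cactusGen_mul_cactusGen_of_le {a b c : CactusGen n} (hp : a.1.1 ≤ b.1.1)
    (hq : b.1.2 ≤ a.1.2) (hc₁ : (c.1.1 : ℕ) = a.1.1 + a.1.2 - b.1.2)
    (hc₂ : (c.1.2 : ℕ) = a.1.1 + a.1.2 - b.1.1) :
    cactusGen a * cactusGen b = cactusGen c * cactusGen a := by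
  have h : cactusGen a * cactusGen b * (cactusGen a)⁻¹ * (cactusGen c)⁻¹ = 1 :=
    PresentedGroup.one_of_mem (Or.inr (Or.inr ⟨a, b, c, hp, hq, hc₁, hc₂, rfl⟩))
  exact mul_inv_eq_iff_eq_mul.mp (mul_inv_eq_one.mp h)

theorem cactusGen_conj_sq (a b : CactusGen n) :
    (cactusGen a * cactusGen b * cactusGen a) ^ 2 = 1 := by
  have h := conj_pow (a := cactusGen a) (b := cactusGen b) (i := 2)
  rwa [cactusGen_inv, sq (cactusGen b), cactusGen_mul_self, mul_one, cactusGen_mul_self] at h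

end

namespace CactusGroup

local notation "s₁₂" => cactusGen (n := 3) ⟨(0, 1), by decide⟩
local notation "s₂₃" => cactusGen (n := 3) ⟨(1, 2), by decide⟩
local notation "s₁₃" => cactusGen (n := 3) ⟨(0, 2), by decide⟩

theorem s₁₃_mul_s₂₃ : s₁₃ * s₂₃ = s₁₂ * s₁₃ :=
  cactusGen_mul_cactusGen_of_le (by decide) (by decide) (by decide) (by decide)

theorem s₁₃_mul_s₂₃_mul_s₁₂_sq : (s₁₃ * s₂₃ * s₁₂) ^ 2 = 1 := by
  rw [s₁₃_mul_s₂₃]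
  exact cactusGen_conj_sq _ _

end CactusGroup

def twinZetaDegree (n : ℕ) : RoundTwinGroup n →* Multiplicative ℤ :=
  PresentedGroup.toGroup (f := Sum.elim 1 fun _ => Multiplicative.ofAdd 1) <| by
    rintro r (⟨i, rfl⟩ | ⟨i, j, -, rfl⟩ | ⟨i, j, -, rfl⟩) <;> simp

@[simp]
theorem twinZetaDegree_twinSigma {n : ℕ} (i : Fin (n - 1)) :
    twinZetaDegree n (twinSigma i) = 1 :=
  PresentedGroup.toGroup.of _

@[simp]
theorem twinZetaDegree_twinZeta (n : ℕ) :
    twinZetaDegree n twinZeta = Multiplicative.ofAdd 1 :=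
  PresentedGroup.toGroup.of _

/-- The group homomorphism `κ : Υ₃ → J₃` determined by `κ(σ₁) = s_{1,2}`,
`κ(σ₂) = s_{2,3}` and `κ(ζ) = s_{1,3} · s_{2,3}` is not injective. (In `0`-based notation,
`s_{1,2} = (0,1)`, `s_{2,3} = (1,2)` and `s_{1,3} = (0,2)`.) -/
theorem kappa_three_not_injective
    (κ : RoundTwinGroup 3 →* CactusGroup 3)
    (hσ : ∀ i : Fin 2,
      κ (twinSigma (n := 3) i) = cactusGen ⟨(⟨(i : ℕ), by have := i.isLt; omega⟩,
        ⟨(i : ℕ) + 1, by have := i.isLt; omega⟩), Fin.mk_lt_mk.mpr (Nat.lt_succ_self _)⟩)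
    (hζ : κ (twinZeta (n := 3)) =
      cactusGen ⟨(⟨0, by omega⟩, ⟨2, by omega⟩), Fin.mk_lt_mk.mpr (by omega)⟩ *
      cactusGen ⟨(⟨1, by omega⟩, ⟨2, by omega⟩), Fin.mk_lt_mk.mpr (by omega)⟩) :
    ¬ Function.Injective κ := by
  intro hinj
  have hκ : κ ((twinZeta * twinSigma 0) ^ 2) = 1 := by
    rw [map_pow, map_mul, hζ, hσ 0]
    exact CactusGroup.s₁₃_mul_s₂₃_mul_s₁₂_sq
  have hdeg : twinZetaDegree 3 ((twinZeta * twinSigma 0) ^ 2) ≠ 1 := by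
    simp only [map_pow, map_mul, twinZetaDegree_twinZeta, twinZetaDegree_twinSigma, mul_one]
    decide
  exact hdeg (by rw [hinj (hκ.trans κ.map_one.symm), map_one])
end

section
/- For every n ≥ 2 there is a surjective group homomorphism J_n → S_n sending each generator s_{p,q} to the permutation τ_{p,q} of {1,…,n} that reverses the order of p, p+1, …, q (i.e. maps i to p+q−i for p ≤ i ≤ q) and fixes all other elements; in particular the assignments s_{p,q} ↦ τ_{p,q} respect the defining relations of J_n. -/
open Equiv

namespace Fin

variable {n : ℕ}

def reverseIccFun (p q i : Fin n) : Fin n :=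
  if h : (p : ℕ) ≤ i ∧ (i : ℕ) ≤ q then ⟨(p : ℕ) + q - i, by omega⟩ else i

theorem val_reverseIccFun (p q i : Fin n) :
    (reverseIccFun p q i : ℕ) = if (p : ℕ) ≤ i ∧ (i : ℕ) ≤ q then (p : ℕ) + q - i else i := by
  unfold reverseIccFun; split <;> rfl

theorem reverseIccFun_involutive (p q : Fin n) : Function.Involutive (reverseIccFun p q) := by
  intro i
  apply Fin.ext
  simp only [val_reverseIccFun]
  split_ifs <;> omega

def reverseIcc (p q : Fin n) : Perm (Fin n) :=
  (reverseIccFun_involutive p q).toPerm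

theorem val_reverseIcc (p q i : Fin n) :
    (reverseIcc p q i : ℕ) = if (p : ℕ) ≤ i ∧ (i : ℕ) ≤ q then (p : ℕ) + q - i else i :=
  val_reverseIccFun p q i

theorem reverseIcc_mul_self (p q : Fin n) : reverseIcc p q * reverseIcc p q = 1 :=
  Perm.ext (reverseIccFun_involutive p q)

theorem commute_reverseIcc_of_disjoint {p q p' q' : Fin n} (h : q < p' ∨ q' < p) :
    Commute (reverseIcc p q) (reverseIcc p' q') := by
  rw [Fin.lt_def, Fin.lt_def] at h
  ext i
  simp only [Perm.mul_apply, val_reverseIcc]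
  split_ifs <;> omega

theorem reverseIcc_mul_reverseIcc_of_le {p q m r m' r' : Fin n} (hpm : p ≤ m) (hrq : r ≤ q)
    (hm' : (m' : ℕ) = p + q - r) (hr' : (r' : ℕ) = p + q - m) :
    reverseIcc p q * reverseIcc m r = reverseIcc m' r' * reverseIcc p q := by
  rw [Fin.le_def] at hpm hrq
  ext i
  simp only [Perm.mul_apply, val_reverseIcc]
  split_ifs <;> omega

theorem reverseIcc_castSucc_succ {m : ℕ} (i : Fin m) :
    reverseIcc i.castSucc i.succ = swap i.castSucc i.succ := by
  ext j
  rw [val_reverseIcc, swap_apply_def]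
  simp only [Fin.ext_iff, apply_ite Fin.val, val_castSucc, val_succ]
  split_ifs <;> omega

end Fin

variable {n : ℕ}

def CactusGen.toPerm (a : CactusGen n) : Perm (Fin n) :=
  Fin.reverseIcc a.1.1 a.1.2

theorem lift_toPerm_eq_one_of_mem_cactusRels :
    ∀ w ∈ cactusRels n, FreeGroup.lift CactusGen.toPerm w = 1 := by
  rintro w (⟨a, rfl⟩ | ⟨a, b, h, rfl⟩ | ⟨a, b, c, hab, hba, hc₁, hc₂, rfl⟩)
  · simpa [CactusGen.toPerm] using Fin.reverseIcc_mul_self a.1.1 a.1.2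
  · simp [CactusGen.toPerm, (Fin.commute_reverseIcc_of_disjoint h).eq]
  · have h := Fin.reverseIcc_mul_reverseIcc_of_le hab hba hc₁ hc₂
    simp only [map_mul, map_inv, FreeGroup.lift_apply_of, CactusGen.toPerm, h]
    group

variable (n) in
def cactusToPerm : CactusGroup n →* Perm (Fin n) :=
  PresentedGroup.toGroup lift_toPerm_eq_one_of_mem_cactusRels

theorem cactusToPerm_cactusGen (a : CactusGen n) :
    cactusToPerm n (cactusGen a) = Fin.reverseIcc a.1.1 a.1.2 :=
  PresentedGroup.toGroup.of lift_toPerm_eq_one_of_mem_cactusRels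

theorem cactusToPerm_surjective : Function.Surjective (cactusToPerm n) := by
  cases n with
  | zero => exact fun σ => ⟨1, Subsingleton.elim _ _⟩
  | succ m =>
    rw [← MonoidHom.mrange_eq_top, eq_top_iff, ← Perm.mclosure_swap_castSucc_succ,
      Submonoid.closure_le]
    rintro _ ⟨i, rfl⟩
    exact ⟨cactusGen ⟨(i.castSucc, i.succ), i.castSucc_lt_succ⟩,
      (cactusToPerm_cactusGen _).trans (Fin.reverseIcc_castSucc_succ i)⟩

theorem exists_cactus_to_symmetric_general (n : ℕ) :
    ∃ π : CactusGroup n →* Equiv.Perm (Fin n),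
      Function.Surjective π ∧
      ∀ (a : CactusGen n) (i : Fin n),
        ((π (cactusGen a)) i : ℕ) =
          if (a.1.1 : ℕ) ≤ (i : ℕ) ∧ (i : ℕ) ≤ (a.1.2 : ℕ)
          then (a.1.1 : ℕ) + (a.1.2 : ℕ) - (i : ℕ)
          else (i : ℕ) := by
  refine ⟨cactusToPerm n, cactusToPerm_surjective, fun a i => ?_⟩
  rw [cactusToPerm_cactusGen, Fin.val_reverseIcc]

/-- For every `n ≥ 2` there is a surjective group homomorphism `Jₙ → Sₙ`
sending each generator `s_{p,q}` to the permutation `τ_{p,q}` that reverses the order of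
`p, p+1, …, q` (mapping `i` to `p + q - i` for `p ≤ i ≤ q`) and fixes all other elements;
in particular the assignments `s_{p,q} ↦ τ_{p,q}` respect the defining relations of `Jₙ`.
(Indices are `0`-based: the generator `a = ((p,q), _)` is `s_{p+1,q+1}`.) -/
theorem exists_cactus_to_symmetric (n : ℕ) (hn : 2 ≤ n) :
    ∃ π : CactusGroup n →* Equiv.Perm (Fin n),
      Function.Surjective π ∧
      ∀ (a : CactusGen n) (i : Fin n),
        ((π (cactusGen a)) i : ℕ) =
          if (a.1.1 : ℕ) ≤ (i : ℕ) ∧ (i : ℕ) ≤ (a.1.2 : ℕ)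
          then (a.1.1 : ℕ) + (a.1.2 : ℕ) - (i : ℕ)
          else (i : ℕ) :=
  exists_cactus_to_symmetric_general n
end
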